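/- The specialist aggregation algorithm with prior π achieves, for every specialist i ∈ {1,…,M} and every T ≥ 1, the bound Σ_{t ≤ T : i ∈ A_t} (ℓ_t − ℓ_{i,t}) ≤ (1/η) · log(1/π_i). -/

import Mathlib

/-!
The weights `π j * exp (-η * L j t)` of the specialist algorithm, where `L` is the completed
cumulative loss, have total mass at most `exp (-η * Λ t)`, `Λ t` being the learner's cumulative
loss. Indeed, in each round exp-concavity shrinks the active mass by at least the factor
`exp (-η ℓ_t)`, and the inactive specialists are charged exactly the learner's loss `ℓ_t`, so their
mass shrinks by that factor too. Comparing the weight of a single specialist `i` with the total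
then gives `π i * exp (η * (Λ T - L i T)) ≤ 1`, and `Λ T - L i T` is the regret against `i`.
-/

open Finset
-- not `open Real`, which would turn the name `π` into `Real.pi`
open Real (exp log exp_pos exp_add exp_le_exp exp_log log_mul log_le_log log_inv)

section

variable {E Y : Type*} [AddCommGroup E] [Module ℝ E]

def IsExpConcave (X : Set E) (ℓ : E → Y → ℝ) (η : ℝ) : Prop :=
  ∀ (y : Y) (N : ℕ), 1 ≤ N → ∀ x : Fin N → E, (∀ i, x i ∈ X) →
    ∀ v : Fin N → ℝ, (∀ i, 0 ≤ v i) → ∑ i, v i = 1 →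
    ℓ (∑ i, v i • x i) y ≤ -(1/η) * log (∑ i, v i * exp (-η * ℓ (x i) y))

theorem Finset.sum_equivFin_symm {ι M : Type*} [AddCommMonoid M] (s : Finset ι) (f : ι → M) :
    ∑ k : Fin s.card, f (s.equivFin.symm k) = ∑ j ∈ s, f j :=
  (Fintype.sum_equiv s.equivFin.symm _ (fun j : s => f j) fun _ => rfl).trans (sum_coe_sort s f)

namespace IsExpConcave

variable {X : Set E} {ℓ : E → Y → ℝ} {η : ℝ} {ι : Type*}

theorem le_finset_sum (h : IsExpConcave X ℓ η) {s : Finset ι} (hs : s.Nonempty)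
    {x : ι → E} (hx : ∀ j ∈ s, x j ∈ X) {v : ι → ℝ} (hv : ∀ j ∈ s, 0 ≤ v j)
    (hv_sum : ∑ j ∈ s, v j = 1) (y : Y) :
    ℓ (∑ j ∈ s, v j • x j) y ≤ -(1/η) * log (∑ j ∈ s, v j * exp (-η * ℓ (x j) y)) := by
  have hconc := h y s.card (card_pos.2 hs) (fun k => x (s.equivFin.symm k))
    (fun k => hx _ (s.equivFin.symm k).2) (fun k => v (s.equivFin.symm k))
    (fun k => hv _ (s.equivFin.symm k).2) (by rw [s.sum_equivFin_symm v, hv_sum])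
  simpa only [s.sum_equivFin_symm (fun j => v j • x j),
    s.sum_equivFin_symm (fun j => v j * exp (-η * ℓ (x j) y))] using hconc

theorem sum_mul_exp_le (h : IsExpConcave X ℓ η) (hη : 0 < η) {s : Finset ι} (hs : s.Nonempty)
    {x : ι → E} (hx : ∀ j ∈ s, x j ∈ X) {w : ι → ℝ} (hw : ∀ j ∈ s, 0 < w j) (y : Y) :
    ∑ j ∈ s, w j * exp (-η * ℓ (x j) y)
      ≤ exp (-η * ℓ ((∑ j ∈ s, w j)⁻¹ • ∑ j ∈ s, w j • x j) y) * ∑ j ∈ s, w j := by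
  set S := ∑ j ∈ s, w j
  have hS : 0 < S := sum_pos hw hs
  set Z := ∑ j ∈ s, S⁻¹ * w j * exp (-η * ℓ (x j) y)
  have hZ : Z = S⁻¹ * ∑ j ∈ s, w j * exp (-η * ℓ (x j) y) := by
    simp only [Z, mul_sum, mul_assoc]
  have hv : ∀ j ∈ s, 0 < S⁻¹ * w j := fun j hj => mul_pos (inv_pos.2 hS) (hw j hj)
  have hZ_pos : 0 < Z := sum_pos (fun j hj => mul_pos (hv j hj) (exp_pos _)) hs
  have hmean : S⁻¹ • ∑ j ∈ s, w j • x j = ∑ j ∈ s, (S⁻¹ * w j) • x j := by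
    simp only [smul_sum, smul_smul]
  have hconc := h.le_finset_sum hs hx (v := fun j => S⁻¹ * w j)
    (fun j hj => (hv j hj).le) (by rw [← mul_sum, inv_mul_cancel₀ hS.ne']) y
  rw [← hmean] at hconc
  have hlog : log Z ≤ -η * ℓ (S⁻¹ • ∑ j ∈ s, w j • x j) y := by
    have := mul_le_mul_of_nonneg_left hconc hη.le
    rw [← mul_assoc, mul_neg, mul_one_div_cancel hη.ne'] at this
    linarith
  have hZ_le : Z ≤ exp (-η * ℓ (S⁻¹ • ∑ j ∈ s, w j • x j) y) := by
    rwa [← exp_le_exp, exp_log hZ_pos] at hlog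
  calc ∑ j ∈ s, w j * exp (-η * ℓ (x j) y) = Z * S := by
        rw [hZ]; field_simp
    _ ≤ _ := mul_le_mul_of_nonneg_right hZ_le hS.le

/-- One round of the specialist algorithm: the inactive specialists (outside `s`) are charged the
loss of the aggregated prediction `xbar`. -/
theorem sum_mul_exp_ite_le (h : IsExpConcave X ℓ η) (hη : 0 < η) [Fintype ι] [DecidableEq ι]
    {s : Finset ι} (hs : s.Nonempty) {x : ι → E} (hx : ∀ j ∈ s, x j ∈ X) {w : ι → ℝ}
    (hw : ∀ j ∈ s, 0 < w j) {xbar : E} (hxbar : xbar = (∑ j ∈ s, w j)⁻¹ • ∑ j ∈ s, w j • x j)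
    (y : Y) :
    ∑ j, w j * exp (-η * if j ∈ s then ℓ (x j) y else ℓ xbar y)
      ≤ exp (-η * ℓ xbar y) * ∑ j, w j := by
  rw [← sum_add_sum_compl s, ← sum_add_sum_compl s w, mul_add]
  refine add_le_add ?_ (le_of_eq ?_)
  · rw [sum_congr rfl fun j hj => by rw [if_pos hj], hxbar]
    exact h.sum_mul_exp_le hη hs hx hw y
  · rw [mul_sum]
    exact sum_congr rfl fun j hj => by rw [if_neg (mem_compl.1 hj), mul_comm]

end IsExpConcave

theorem specialist_weights_le {X : Set E} {ℓ : E → Y → ℝ} {η : ℝ} (hexp : IsExpConcave X ℓ η)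
    (hη : 0 < η) {M : ℕ} {π : Fin M → ℝ} (hπ : ∀ i, 0 < π i) {A : ℕ → Finset (Fin M)}
    (hA : ∀ t, 1 ≤ t → (A t).Nonempty) {xe : Fin M → ℕ → E}
    (hxe : ∀ i t, 1 ≤ t → i ∈ A t → xe i t ∈ X) {y : ℕ → Y} {xl : ℕ → E} {L : Fin M → ℕ → ℝ}
    (hL_zero : ∀ i, L i 0 = 0)
    (hL_succ : ∀ i t, L i (t + 1) =
      L i t + if i ∈ A (t + 1) then ℓ (xe i (t + 1)) (y (t + 1)) else ℓ (xl (t + 1)) (y (t + 1)))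
    (hxl : ∀ t, xl (t + 1) =
      (∑ i ∈ A (t + 1), π i * exp (-η * L i t))⁻¹ •
        ∑ i ∈ A (t + 1), (π i * exp (-η * L i t)) • xe i (t + 1))
    (T : ℕ) :
    ∑ i, π i * exp (-η * L i T) ≤ exp (-η * ∑ t ∈ Icc 1 T, ℓ (xl t) (y t)) * ∑ i, π i := by
  induction T with
  | zero => simp [hL_zero]
  | succ T ih =>
    have hround := hexp.sum_mul_exp_ite_le hη (hA _ le_add_self)
      (fun i => hxe i _ le_add_self) (fun i _ => mul_pos (hπ i) (exp_pos (-η * L i T)))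
      (hxl T) (y (T + 1))
    calc ∑ i, π i * exp (-η * L i (T + 1))
        = ∑ i, π i * exp (-η * L i T) * exp (-η * if i ∈ A (T + 1)
            then ℓ (xe i (T + 1)) (y (T + 1)) else ℓ (xl (T + 1)) (y (T + 1))) := by
          simp only [hL_succ, mul_add, exp_add, mul_assoc]
      _ ≤ exp (-η * ℓ (xl (T + 1)) (y (T + 1))) * ∑ i, π i * exp (-η * L i T) := hround
      _ ≤ exp (-η * ℓ (xl (T + 1)) (y (T + 1)))
            * (exp (-η * ∑ t ∈ Icc 1 T, ℓ (xl t) (y t)) * ∑ i, π i) := by gcongr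
      _ = exp (-η * ∑ t ∈ Icc 1 (T + 1), ℓ (xl t) (y t)) * ∑ i, π i := by
          rw [sum_Icc_succ_top le_add_self, mul_add, exp_add]
          ring

end

theorem specialist_aggregation_regret_general
    {E : Type*} [AddCommGroup E] [Module ℝ E] {Y : Type*}
    (X : Set E) (ℓ : E → Y → ℝ) (η : ℝ) (hη : 0 < η)
    (hexp : ∀ (yy : Y) (N : ℕ), 1 ≤ N → ∀ xs : Fin N → E, (∀ i, xs i ∈ X) →
      ∀ vv : Fin N → ℝ, (∀ i, 0 ≤ vv i) → (∑ i, vv i) = 1 →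
      ℓ (∑ i, vv i • xs i) yy ≤ -(1/η) * Real.log (∑ i, vv i * Real.exp (-η * ℓ (xs i) yy)))
    (M : ℕ)
    (π : Fin M → ℝ) (hπpos : ∀ i, 0 < π i) (hπsum : ∑ i, π i = 1)
    (A : ℕ → Finset (Fin M)) (hA : ∀ t, 1 ≤ t → (A t).Nonempty)
    (xe : Fin M → ℕ → E) (hxe : ∀ i t, 1 ≤ t → i ∈ A t → xe i t ∈ X)
    (y : ℕ → Y) (xl : ℕ → E)
    (Lc : Fin M → ℕ → ℝ)
    -- completed cumulative losses L_{i,t} = Σ_{s ≤ t : i ∈ A_s} ℓ_{i,s} + Σ_{s ≤ t : i ∉ A_s} ℓ_s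
    (hLc : ∀ i t, Lc i t = ∑ s ∈ Finset.Icc 1 t,
      (if i ∈ A s then ℓ (xe i s) (y s) else ℓ (xl s) (y s)))
    -- the learner aggregates the active specialists with weights w_{i,t} = π_i exp(−η L_{i,t−1})
    (hxl : ∀ t, 1 ≤ t → xl t =
      (∑ i ∈ A t, π i * Real.exp (-η * Lc i (t-1)))⁻¹ •
        ∑ i ∈ A t, (π i * Real.exp (-η * Lc i (t-1))) • xe i t) :
    ∀ T : ℕ, 1 ≤ T → ∀ i : Fin M,
      ∑ t ∈ (Finset.Icc 1 T).filter (fun t => i ∈ A t),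
          (ℓ (xl t) (y t) - ℓ (xe i t) (y t))
        ≤ (1/η) * Real.log (1 / π i) := by
  intro T _ i
  set Λ := ∑ t ∈ Icc 1 T, ℓ (xl t) (y t)
  have hweights := specialist_weights_le (L := Lc) (y := y) hexp hη hπpos hA hxe (by simp [hLc])
    (fun i t => by rw [hLc, hLc, sum_Icc_succ_top le_add_self]) (fun t => hxl (t + 1) le_add_self) T
  have hsingle : π i * exp (-η * Lc i T) ≤ exp (-η * Λ) :=
    (single_le_sum (f := fun j => π j * exp (-η * Lc j T))
      (fun j _ => (mul_pos (hπpos j) (exp_pos _)).le) (mem_univ i)).trans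
      (hweights.trans_eq (by rw [hπsum, mul_one]))
  have hregret : ∑ t ∈ (Icc 1 T).filter (fun t => i ∈ A t), (ℓ (xl t) (y t) - ℓ (xe i t) (y t))
      = Λ - Lc i T := by
    rw [hLc, ← sum_sub_distrib, sum_filter]
    exact sum_congr rfl fun t _ => by split_ifs <;> ring
  have hlog : log (π i) - η * Lc i T ≤ -η * Λ := by
    have hpos : 0 < π i * exp (-η * Lc i T) := mul_pos (hπpos i) (exp_pos _)
    simpa [log_mul (hπpos i).ne' (exp_pos _).ne'] using log_le_log hpos hsingle
  rw [hregret, one_div_mul_eq_div, le_div_iff₀ hη, one_div, log_inv]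
  linarith

/-- **Specialist aggregation regret bound (Proposition 2, first part).**
The specialist aggregation algorithm with prior π achieves, for every specialist i
and every T ≥ 1, the bound Σ_{t ≤ T : i ∈ A_t} (ℓ_t − ℓ_{i,t}) ≤ (1/η)·log(1/π_i). -/
theorem specialist_aggregation_regret
    {E : Type*} [AddCommGroup E] [Module ℝ E] {Y : Type*}
    (X : Set E) (ℓ : E → Y → ℝ) (η : ℝ) (hη : 0 < η)
    (hexp : ∀ (yy : Y) (N : ℕ), 1 ≤ N → ∀ xs : Fin N → E, (∀ i, xs i ∈ X) →
      ∀ vv : Fin N → ℝ, (∀ i, 0 ≤ vv i) → (∑ i, vv i) = 1 →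
      ℓ (∑ i, vv i • xs i) yy ≤ -(1/η) * Real.log (∑ i, vv i * Real.exp (-η * ℓ (xs i) yy)))
    (M : ℕ) (hM : 1 ≤ M)
    (π : Fin M → ℝ) (hπpos : ∀ i, 0 < π i) (hπsum : ∑ i, π i = 1)
    (A : ℕ → Finset (Fin M)) (hA : ∀ t, 1 ≤ t → (A t).Nonempty)
    (xe : Fin M → ℕ → E) (hxe : ∀ i t, 1 ≤ t → i ∈ A t → xe i t ∈ X)
    (y : ℕ → Y) (xl : ℕ → E)
    (Lc : Fin M → ℕ → ℝ)
    -- completed cumulative losses L_{i,t} = Σ_{s ≤ t : i ∈ A_s} ℓ_{i,s} + Σ_{s ≤ t : i ∉ A_s} ℓ_s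
    (hLc : ∀ i t, Lc i t = ∑ s ∈ Finset.Icc 1 t,
      (if i ∈ A s then ℓ (xe i s) (y s) else ℓ (xl s) (y s)))
    -- the learner aggregates the active specialists with weights w_{i,t} = π_i exp(−η L_{i,t−1})
    (hxl : ∀ t, 1 ≤ t → xl t =
      (∑ i ∈ A t, π i * Real.exp (-η * Lc i (t-1)))⁻¹ •
        ∑ i ∈ A t, (π i * Real.exp (-η * Lc i (t-1))) • xe i t) :
    ∀ T : ℕ, 1 ≤ T → ∀ i : Fin M,
      ∑ t ∈ (Finset.Icc 1 T).filter (fun t => i ∈ A t),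
          (ℓ (xl t) (y t) - ℓ (xe i t) (y t))
        ≤ (1/η) * Real.log (1 / π i) :=
  specialist_aggregation_regret_general X ℓ η hη hexp M π hπpos hπsum A hA xe hxe y xl Lc hLc hxl
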